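/- arXiv:1509.02683 — 2 statements merged into one kernel-verified Lean document; each statement's English description precedes it below -/
import Mathlib

section
/- Let G be a constraint graph, let C_1 and C_2 be legal configurations of G, let D be the set of edges on which C_1 and C_2 differ, and let l ≥ 1. If there exists a reconfiguration sequence of length at most l from C_1 to C_2, then there exists such a sequence of length at most l in which every edge reversed at any step lies at distance at most l, in the line graph of G, from some edge of D. -/
/-!
STATEMENT 11: Let G be a constraint graph, let C_1 and C_2 be legal
configurations of G, let D be the set of edges on which C_1 and C_2 differ,
and let l ≥ 1. If there exists a reconfiguration sequence of length at most l
from C_1 to C_2, then there exists such a sequence of length at most l in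
which every edge reversed at any step lies at distance at most l, in the line
graph of G, from some edge of D.

"Lies at distance at most l from some edge of D" is formalized as the
existence of a walk in the line graph from some edge of D to the edge, of
length at most l.
-/

/-- A configuration of a constraint graph assigns to each edge one of its
two endpoints (its head). -/
def IsConf {V : Type} (G : SimpleGraph V) (C : Sym2 V → V) : Prop :=
  ∀ e ∈ G.edgeSet, C e ∈ e

/-- A configuration is legal if every vertex receives inflow (total weight of
edges whose head is that vertex) at least its minimum inflow. -/
def Legal {V : Type} [Fintype V] [DecidableEq V] (G : SimpleGraph V)
    [DecidableRel G.Adj] (w : Sym2 V → ℕ) (μ : V → ℕ) (C : Sym2 V → V) : Prop :=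
  ∀ v : V, μ v ≤ ∑ e ∈ G.edgeFinset, if C e = v then w e else 0

/-- Two configurations agree (as orientations of the edges of `G`). -/
def ConfEq {V : Type} (G : SimpleGraph V) (C C' : Sym2 V → V) : Prop :=
  ∀ e ∈ G.edgeSet, C e = C' e

/-- One reconfiguration step: exactly one edge changes its orientation. -/
def Step {V : Type} (G : SimpleGraph V) (C C' : Sym2 V → V) : Prop :=
  ∃ e ∈ G.edgeSet, C e ≠ C' e ∧ ∀ f ∈ G.edgeSet, f ≠ e → C f = C' f

/-- A reconfiguration sequence: every configuration is a legal configuration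
and each consecutive pair differs in the orientation of exactly one edge. -/
def IsReconfSeq {V : Type} [Fintype V] [DecidableEq V] (G : SimpleGraph V)
    [DecidableRel G.Adj] (w : Sym2 V → ℕ) (μ : V → ℕ) {m : ℕ}
    (Cs : Fin (m + 1) → Sym2 V → V) : Prop :=
  (∀ i, IsConf G (Cs i) ∧ Legal G w μ (Cs i)) ∧
    ∀ i : Fin m, Step G (Cs i.castSucc) (Cs i.succ)

/-- In the sequence, each edge is reversed at most once. -/
def AtMostOnce {V : Type} (G : SimpleGraph V) {m : ℕ}
    (Cs : Fin (m + 1) → Sym2 V → V) : Prop :=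
  ∀ e ∈ G.edgeSet, ∀ i j : Fin m,
    Cs i.castSucc e ≠ Cs i.succ e → Cs j.castSucc e ≠ Cs j.succ e → i = j

/-- The line graph of `G`, on the vertex set `Sym2 V`: two edges of `G` are
adjacent iff they are distinct and share an endpoint. -/
def LineG {V : Type} (G : SimpleGraph V) : SimpleGraph (Sym2 V) where
  Adj e f := e ≠ f ∧ e ∈ G.edgeSet ∧ f ∈ G.edgeSet ∧ ∃ v, v ∈ e ∧ v ∈ f
  symm := by
    constructor
    rintro e f ⟨h1, h2, h3, v, hv1, hv2⟩
    exact ⟨h1.symm, h3, h2, v, hv2, hv1⟩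
  loopless := by constructor; rintro e ⟨h1, -⟩; exact h1 rfl

/-!
Let `R` be the set of edges reversed somewhere in the given sequence, so `|R| ≤ l`. Call an edge
good if a walk in the line graph that stays inside `R` joins it to an edge of `D`; taking that walk
to be a path, its length is less than `|R|`. Drop every step that reverses a bad edge and keep the
bad edges at their initial orientation. No reversed good edge shares a vertex with a reversed bad
edge, so around each vertex the new configuration agrees either with the initial configuration or
with the current one of the old sequence, and therefore stays legal. Bad edges are not in `D`, so
the sequence still ends at `C₂`.
-/

open Finset

namespace SimpleGraph

variable {α : Type*} (H : SimpleGraph α)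

def reachableWithin (s D : Finset α) : Set α :=
  {f | ∃ d ∈ D, ∃ (hd : d ∈ s) (hf : f ∈ s), (H.induce (s : Set α)).Reachable ⟨d, hd⟩ ⟨f, hf⟩}

variable {H} {s D : Finset α}

theorem subset_reachableWithin (hD : D ⊆ s) : (D : Set α) ⊆ H.reachableWithin s D :=
  fun d hd => ⟨d, hd, hD hd, hD hd, .rfl⟩

theorem reachableWithin_of_adj {e f : α} (he : e ∈ H.reachableWithin s D) (hf : f ∈ s)
    (hadj : H.Adj e f) : f ∈ H.reachableWithin s D := by
  obtain ⟨d, hdD, hd, _, hreach⟩ := he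
  exact ⟨d, hdD, hd, hf, hreach.trans (Adj.reachable (G := H.induce (s : Set α)) hadj)⟩

theorem exists_walk_length_lt_of_mem_reachableWithin {f : α}
    (hf : f ∈ H.reachableWithin s D) : ∃ d ∈ D, ∃ p : H.Walk d f, p.length < #s := by
  classical
  obtain ⟨d, hdD, hd, hf, ⟨q⟩⟩ := hf
  have hlen : q.bypass.length < #s := by simpa using q.bypass_isPath.length_lt
  exact ⟨d, hdD, q.bypass.map (Embedding.induce _).toHom, (Walk.length_map _ _).trans_lt hlen⟩

end SimpleGraph

section Reconfiguration

variable {V : Type} {G : SimpleGraph V}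

theorem ConfEq.trans {C₁ C₂ C₃ : Sym2 V → V} (h₁₂ : ConfEq G C₁ C₂) (h₂₃ : ConfEq G C₂ C₃) :
    ConfEq G C₁ C₃ :=
  fun e he => (h₁₂ e he).trans (h₂₃ e he)

theorem Step.congr_left {C C' C'' : Sym2 V → V} (h : ConfEq G C C') (hs : Step G C' C'') :
    Step G C C'' := by
  obtain ⟨e, he, hne, hrest⟩ := hs
  exact ⟨e, he, by rwa [h e he], fun f hf hfe => (h f hf).trans (hrest f hf hfe)⟩

theorem IsConf.piecewise {C C' : Sym2 V → V} (hC : IsConf G C) (hC' : IsConf G C')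
    (F : Set (Sym2 V)) [DecidablePred (· ∈ F)] : IsConf G (F.piecewise C C') := by
  intro e he
  by_cases heF : e ∈ F
  · simpa [heF] using hC e he
  · simpa [heF] using hC' e he

variable [Fintype V] [DecidableEq V] [DecidableRel G.Adj] {w : Sym2 V → ℕ} {μ : V → ℕ}

theorem Legal.of_forall_exists_eqOn_incident {C : Sym2 V → V} (hC : IsConf G C)
    (h : ∀ v, ∃ C', IsConf G C' ∧ Legal G w μ C' ∧ ∀ e ∈ G.edgeSet, v ∈ e → C' e = C e) :
    Legal G w μ C := by
  intro v
  obtain ⟨C', hC', hlegal, heq⟩ := h v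
  refine (hlegal v).trans_eq (sum_congr rfl fun e he => ?_)
  rw [SimpleGraph.mem_edgeFinset] at he
  by_cases hv : v ∈ e
  · rw [heq e he hv]
  · have h₁ : C' e ≠ v := fun h => hv (h ▸ hC' e he)
    have h₂ : C e ≠ v := fun h => hv (h ▸ hC e he)
    rw [if_neg h₁, if_neg h₂]

variable (G w μ) in
def ReconfWithin (S : Set (Sym2 V)) (n : ℕ) (C C' : Sym2 V → V) : Prop :=
  ∃ Cs : Fin (n + 1) → Sym2 V → V, ConfEq G (Cs 0) C ∧ ConfEq G (Cs (Fin.last n)) C' ∧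
    IsReconfSeq G w μ Cs ∧ ∀ f ∈ G.edgeSet, (∃ i : Fin n, Cs i.castSucc f ≠ Cs i.succ f) → f ∈ S

namespace ReconfWithin

variable {S : Set (Sym2 V)} {n : ℕ} {C C' C'' : Sym2 V → V}

theorem refl (hC : IsConf G C ∧ Legal G w μ C) : ReconfWithin G w μ S 0 C C :=
  ⟨fun _ => C, fun _ _ => rfl, fun _ _ => rfl, ⟨fun _ => hC, fun i => i.elim0⟩,
    fun _ _ ⟨i, _⟩ => i.elim0⟩

theorem congr_right (h : ReconfWithin G w μ S n C C') (h' : ConfEq G C' C'') :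
    ReconfWithin G w μ S n C C'' := by
  obtain ⟨Cs, h0, hlast, hseq, hS⟩ := h
  exact ⟨Cs, h0, hlast.trans h', hseq, hS⟩

theorem snoc (h : ReconfWithin G w μ S n C C') (hstep : Step G C' C'')
    (hC'' : IsConf G C'' ∧ Legal G w μ C'') (hS : ∀ f ∈ G.edgeSet, C' f ≠ C'' f → f ∈ S) :
    ReconfWithin G w μ S (n + 1) C C'' := by
  obtain ⟨Cs, h0, hlast, ⟨hlegal, hsteps⟩, hrev⟩ := h
  refine ⟨Fin.snoc (α := fun _ => Sym2 V → V) Cs C'', ?_, by simp [ConfEq], ⟨?_, ?_⟩, ?_⟩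
  · simpa only [← Fin.castSucc_zero' (n := n + 1), Fin.snoc_castSucc] using h0
  · intro i
    induction i using Fin.lastCases <;> simp [hlegal, hC'']
  · intro i
    induction i using Fin.lastCases with
    | last => simpa using hstep.congr_left hlast
    | cast j => simpa only [Fin.succ_castSucc, Fin.snoc_castSucc] using hsteps j
  · rintro f hf ⟨i, hi⟩
    induction i using Fin.lastCases with
    | last => exact hS f hf (by simpa [hlast f hf] using hi)
    | cast j => exact hrev f hf ⟨j, by simpa only [Fin.succ_castSucc, Fin.snoc_castSucc] using hi⟩

end ReconfWithin

end Reconfiguration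

section Freezing

variable {V : Type} [Fintype V] [DecidableEq V] {G : SimpleGraph V} [DecidableRel G.Adj]
  {w : Sym2 V → ℕ} {μ : V → ℕ} {m : ℕ} (Cs : Fin (m + 1) → Sym2 V → V)

variable (G) in
def reversedEdges : Finset (Sym2 V) :=
  G.edgeFinset.filter fun f => ∃ i : Fin m, Cs i.castSucc f ≠ Cs i.succ f

theorem mem_edgeSet_of_mem_reversedEdges {f : Sym2 V} (hf : f ∈ reversedEdges G Cs) :
    f ∈ G.edgeSet :=
  SimpleGraph.mem_edgeFinset.1 (filter_subset _ _ hf)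

theorem apply_eq_apply_zero_of_notMem_reversedEdges {f : Sym2 V} (hf : f ∈ G.edgeSet)
    (hfR : f ∉ reversedEdges G Cs) (i : Fin (m + 1)) : Cs i f = Cs 0 f := by
  induction i using Fin.induction with
  | zero => rfl
  | succ i ih =>
    rw [← ih]
    by_contra hne
    exact hfR (mem_filter.2 ⟨SimpleGraph.mem_edgeFinset.2 hf, i, Ne.symm hne⟩)

theorem card_reversedEdges_le (hCs : ∀ i : Fin m, Step G (Cs i.castSucc) (Cs i.succ)) :
    #(reversedEdges G Cs) ≤ m := by
  choose s hs using hCs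
  have hsub : reversedEdges G Cs ⊆ univ.image s := by
    intro f hf
    obtain ⟨hfE, i, hi⟩ := mem_filter.1 hf
    refine mem_image.2 ⟨i, mem_univ _, ?_⟩
    by_contra hfs
    exact hi ((hs i).2.2 f (SimpleGraph.mem_edgeFinset.1 hfE) (Ne.symm hfs))
  calc #(reversedEdges G Cs) ≤ #(univ.image s) := card_le_card hsub
    _ ≤ #(univ : Finset (Fin m)) := card_image_le
    _ = m := card_fin m

variable {Cs} (F : Set (Sym2 V)) [DecidablePred (· ∈ F)]

theorem piecewise_isConf_legal (hCs : IsReconfSeq G w μ Cs)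
    (hF : ∀ e ∈ reversedEdges G Cs, ∀ f ∈ reversedEdges G Cs, (LineG G).Adj e f → e ∈ F → f ∈ F)
    (i : Fin (m + 1)) :
    IsConf G (F.piecewise (Cs i) (Cs 0)) ∧ Legal G w μ (F.piecewise (Cs i) (Cs 0)) := by
  have hconf := (hCs.1 i).1.piecewise (hCs.1 0).1 F
  refine ⟨hconf, Legal.of_forall_exists_eqOn_incident hconf fun v => ?_⟩
  have hfix : ∀ {e}, e ∈ G.edgeSet → e ∉ reversedEdges G Cs → Cs i e = Cs 0 e :=
    fun he heR => apply_eq_apply_zero_of_notMem_reversedEdges Cs he heR i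
  by_cases hv : ∃ e₀ ∈ reversedEdges G Cs, e₀ ∉ F ∧ v ∈ e₀
  · obtain ⟨e₀, he₀R, he₀F, hve₀⟩ := hv
    refine ⟨Cs 0, (hCs.1 0).1, (hCs.1 0).2, fun e he hve => ?_⟩
    by_cases heF : e ∈ F
    · have heR : e ∉ reversedEdges G Cs := fun heR =>
        he₀F <| hF e heR e₀ he₀R ⟨ne_of_mem_of_not_mem heF he₀F, he,
          mem_edgeSet_of_mem_reversedEdges Cs he₀R, v, hve, hve₀⟩ heF
      simp [heF, hfix he heR]
    · simp [heF]
  · push Not at hv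
    refine ⟨Cs i, (hCs.1 i).1, (hCs.1 i).2, fun e he hve => ?_⟩
    by_cases heF : e ∈ F
    · simp [heF]
    · have heR : e ∉ reversedEdges G Cs := fun heR => hv e heR heF hve
      simp [heF, hfix he heR]

theorem piecewise_confEq_or_step (hCs : IsReconfSeq G w μ Cs) (i : Fin m) :
    ConfEq G (F.piecewise (Cs i.castSucc) (Cs 0)) (F.piecewise (Cs i.succ) (Cs 0)) ∨
      Step G (F.piecewise (Cs i.castSucc) (Cs 0)) (F.piecewise (Cs i.succ) (Cs 0)) ∧
        ∀ f ∈ G.edgeSet, F.piecewise (Cs i.castSucc) (Cs 0) f ≠ F.piecewise (Cs i.succ) (Cs 0) f →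
          f ∈ F := by
  obtain ⟨e, he, hne, hrest⟩ := hCs.2 i
  by_cases heF : e ∈ F
  · refine .inr ⟨⟨e, he, by simpa [heF] using hne, fun f hf hfe => ?_⟩, fun f _ hf => ?_⟩
    · by_cases hfF : f ∈ F <;> simp [hfF, hrest f hf hfe]
    · by_contra hfF
      simp [hfF] at hf
  · refine .inl fun f hf => ?_
    by_cases hfF : f ∈ F
    · simp [hfF, hrest f hf (ne_of_mem_of_not_mem hfF heF)]
    · simp [hfF]

theorem exists_reconfWithin_piecewise (hCs : IsReconfSeq G w μ Cs)
    (hF : ∀ e ∈ reversedEdges G Cs, ∀ f ∈ reversedEdges G Cs, (LineG G).Adj e f → e ∈ F → f ∈ F)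
    (i : Fin (m + 1)) :
    ∃ n ≤ (i : ℕ), ReconfWithin G w μ F n (Cs 0) (F.piecewise (Cs i) (Cs 0)) := by
  induction i using Fin.induction with
  | zero => exact ⟨0, le_rfl, by simpa using ReconfWithin.refl (hCs.1 0)⟩
  | succ i ih =>
    obtain ⟨n, hn, hreach⟩ := ih
    rcases piecewise_confEq_or_step F hCs i with heq | ⟨hstep, hS⟩
    · exact ⟨n, by simp only [Fin.val_castSucc, Fin.val_succ] at hn ⊢; omega,
        hreach.congr_right heq⟩
    · exact ⟨n + 1, by simp only [Fin.val_castSucc, Fin.val_succ] at hn ⊢; omega,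
        hreach.snoc hstep (piecewise_isConf_legal F hCs hF i.succ) hS⟩

end Freezing

theorem stmt11_general {V : Type} [Fintype V] [DecidableEq V] (G : SimpleGraph V)
    [DecidableRel G.Adj] (w : Sym2 V → ℕ) (μ : V → ℕ)
    (C₁ C₂ : Sym2 V → V)
    (D : Finset (Sym2 V)) (hD : D = G.edgeFinset.filter fun e => C₁ e ≠ C₂ e)
    (l : ℕ)
    (h : ∃ (m : ℕ) (Cs : Fin (m + 1) → Sym2 V → V), m ≤ l ∧
        ConfEq G (Cs 0) C₁ ∧ ConfEq G (Cs (Fin.last m)) C₂ ∧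
        IsReconfSeq G w μ Cs) :
    ∃ (m : ℕ) (Cs : Fin (m + 1) → Sym2 V → V), m ≤ l ∧
        ConfEq G (Cs 0) C₁ ∧ ConfEq G (Cs (Fin.last m)) C₂ ∧
        IsReconfSeq G w μ Cs ∧
        ∀ f ∈ G.edgeSet, (∃ i : Fin m, Cs i.castSucc f ≠ Cs i.succ f) →
          ∃ d ∈ D, ∃ p : (LineG G).Walk d f, p.length ≤ l := by
  classical
  obtain ⟨m, Cs, hm, h0, hlast, hCs⟩ := h
  have hmemD : ∀ f ∈ G.edgeSet, f ∈ D ↔ C₁ f ≠ C₂ f := fun f hf => by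
    simp [hD, SimpleGraph.mem_edgeFinset.2 hf]
  have hDR : D ⊆ reversedEdges G Cs := fun d hd => by
    have hdE : d ∈ G.edgeSet := SimpleGraph.mem_edgeFinset.1 (mem_filter.1 (hD ▸ hd)).1
    by_contra hdR
    refine (hmemD d hdE).1 hd ?_
    rw [← h0 d hdE, ← hlast d hdE,
      apply_eq_apply_zero_of_notMem_reversedEdges Cs hdE hdR (Fin.last m)]
  set F := (LineG G).reachableWithin (reversedEdges G Cs) D
  obtain ⟨n, hn, Cs', h0', hlast', hCs', hrev⟩ := exists_reconfWithin_piecewise F hCs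
    (fun e _ f hf hadj he => SimpleGraph.reachableWithin_of_adj he hf hadj) (Fin.last m)
  refine ⟨n, Cs', hn.trans hm, h0'.trans h0, hlast'.trans fun f hf => ?_, hCs', fun f hf hf' => ?_⟩
  · by_cases hfF : f ∈ F
    · simpa [hfF] using hlast f hf
    · have hfD : f ∉ D := fun hfD => hfF (SimpleGraph.subset_reachableWithin hDR hfD)
      simpa [hfF, h0 f hf, hmemD f hf] using hfD
  · obtain ⟨d, hd, p, hp⟩ := SimpleGraph.exists_walk_length_lt_of_mem_reachableWithin (hrev f hf hf')
    have hR := card_reversedEdges_le Cs hCs.2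
    exact ⟨d, hd, p, by omega⟩

theorem stmt11 {V : Type} [Fintype V] [DecidableEq V] (G : SimpleGraph V)
    [DecidableRel G.Adj] (w : Sym2 V → ℕ) (μ : V → ℕ)
    (C₁ C₂ : Sym2 V → V)
    (h₁ : IsConf G C₁ ∧ Legal G w μ C₁) (h₂ : IsConf G C₂ ∧ Legal G w μ C₂)
    (D : Finset (Sym2 V)) (hD : D = G.edgeFinset.filter fun e => C₁ e ≠ C₂ e)
    (l : ℕ) (hl : 1 ≤ l)
    (h : ∃ (m : ℕ) (Cs : Fin (m + 1) → Sym2 V → V), m ≤ l ∧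
        ConfEq G (Cs 0) C₁ ∧ ConfEq G (Cs (Fin.last m)) C₂ ∧
        IsReconfSeq G w μ Cs) :
    ∃ (m : ℕ) (Cs : Fin (m + 1) → Sym2 V → V), m ≤ l ∧
        ConfEq G (Cs 0) C₁ ∧ ConfEq G (Cs (Fin.last m)) C₂ ∧
        IsReconfSeq G w μ Cs ∧
        ∀ f ∈ G.edgeSet, (∃ i : Fin m, Cs i.castSucc f ≠ Cs i.succ f) →
          ∃ d ∈ D, ∃ p : (LineG G).Walk d f, p.length ≤ l :=
  stmt11_general G w μ C₁ C₂ D hD l h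
end

section
/- Let G be a finite simple graph and let G' be its triangle replacement. For every set S ⊆ V(G): S is an odd cycle transversal of G' if and only if S is a vertex cover of G. -/
/-!
STATEMENT 14: Let G be a finite simple graph and let G' be its triangle
replacement. For every set S ⊆ V(G): S is an odd cycle transversal of G' if
and only if S is a vertex cover of G.

The triangle replacement is built on the vertex type `V ⊕ {e // e ∈ G.edgeSet}`:
`Sum.inl u` is the original vertex `u` and `Sum.inr e` is the new vertex `x_e`
added for the edge `e`.
-/

/-- `S` is a vertex cover of `G`. -/
def IsVC {V : Type} (G : SimpleGraph V) (S : Set V) : Prop :=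
  ∀ ⦃u v : V⦄, G.Adj u v → u ∈ S ∨ v ∈ S

/-- `S` is an odd cycle transversal of `H`: it meets every odd cycle of `H`. -/
def IsOCT {W : Type} (H : SimpleGraph W) (S : Set W) : Prop :=
  ∀ (v : W) (c : H.Walk v v), c.IsCycle → Odd c.length → ∃ u ∈ c.support, u ∈ S

/-- The triangle replacement `G'` of `G`: for every edge `e = {u,v}` of `G`, a
new vertex `x_e` adjacent to `u` and to `v` is added (keeping all edges of
`G`). -/
def TriRep {V : Type} (G : SimpleGraph V) :
    SimpleGraph (V ⊕ {e : Sym2 V // e ∈ G.edgeSet}) where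
  Adj a b :=
    match a, b with
    | .inl u, .inl v => G.Adj u v
    | .inl u, .inr e => u ∈ (e : Sym2 V)
    | .inr e, .inl u => u ∈ (e : Sym2 V)
    | .inr _, .inr _ => False
  symm := by
    constructor
    rintro (u | e) (v | f) h
    · exact h.symm
    · exact h
    · exact h
    · exact h.elim
  loopless := by
    constructor
    rintro (u | e) h
    · exact G.irrefl h
    · exact h

/-!
A vertex cover `S` must meet the triangle `u, v, x_e` of every edge `e = uv`, and `x_e ∉ S`.
Conversely, if `S` is a vertex cover then every edge of `G'` avoiding `S` joins an original vertex
to a new one, so the graph `G' - S` is bipartite and has no odd cycle at all.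
-/

open SimpleGraph

section triRep

variable {V : Type} {G : SimpleGraph V}

@[simp]
lemma triRep_adj_inl_inr {u : V} {e : {e : Sym2 V // e ∈ G.edgeSet}} :
    (TriRep G).Adj (.inl u) (.inr e) ↔ u ∈ (e : Sym2 V) := Iff.rfl

@[simp]
lemma triRep_adj_inr_inl {u : V} {e : {e : Sym2 V // e ∈ G.edgeSet}} :
    (TriRep G).Adj (.inr e) (.inl u) ↔ u ∈ (e : Sym2 V) := Iff.rfl

@[simp]
lemma not_triRep_adj_inr_inr {e f : {e : Sym2 V // e ∈ G.edgeSet}} :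
    ¬ (TriRep G).Adj (.inr e) (.inr f) := id

lemma IsVC.edges_subset_completeBipartiteGraph {S : Set V} (hS : IsVC G S)
    {a b : V ⊕ {e : Sym2 V // e ∈ G.edgeSet}} (p : (TriRep G).Walk a b)
    (hp : ∀ x ∈ p.support, x ∉ Sum.inl '' S) :
    ∀ e ∈ p.edges, e ∈ (completeBipartiteGraph V {e : Sym2 V // e ∈ G.edgeSet}).edgeSet := by
  intro e he
  induction e using Sym2.ind with
  | h x y =>
    have hxy := p.adj_of_mem_edges he
    have hx := hp x (p.fst_mem_support_of_mem_edges he)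
    have hy := hp y (p.snd_mem_support_of_mem_edges he)
    rcases x with u | _ <;> rcases y with v | _
    · rcases hS hxy with h | h
      · exact absurd ⟨u, h, rfl⟩ hx
      · exact absurd ⟨v, h, rfl⟩ hy
    · simp
    · simp
    · exact absurd hxy not_triRep_adj_inr_inr

end triRep

lemma IsOCT.mem_of_adj_of_adj_of_adj {W : Type} {H : SimpleGraph W} {T : Set W} (hT : IsOCT H T)
    {a b c : W} (hab : H.Adj a b) (hbc : H.Adj b c) (hca : H.Adj c a) :
    a ∈ T ∨ b ∈ T ∨ c ∈ T := by
  let w : H.Walk a a := .cons hab (.cons hbc (.cons hca .nil))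
  have hw : w.IsCycle := by
    simp [w, Walk.isCycle_def, hab.ne, hab.ne.symm, hbc.ne, hca.ne, hca.ne.symm, Sym2.eq_swap]
  obtain ⟨x, hx, hxT⟩ := hT a w hw ⟨1, rfl⟩
  simp only [w, Walk.support_cons, Walk.support_nil, List.mem_cons, List.not_mem_nil,
    or_false] at hx
  rcases hx with rfl | rfl | rfl | rfl <;> simp [hxT]

lemma SimpleGraph.Walk.even_length_of_edges_subset_completeBipartiteGraph {V W : Type*}
    {H : SimpleGraph (V ⊕ W)} {a : V ⊕ W} (p : H.Walk a a)
    (hp : ∀ e ∈ p.edges, e ∈ (completeBipartiteGraph V W).edgeSet) : Even p.length := by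
  simpa using ((CompleteBipartiteGraph.bicoloring V W).even_length_iff_congr
    (p.transfer _ hp)).mpr Iff.rfl

theorem stmt14_general {V : Type} (G : SimpleGraph V)
    (S : Set V) :
    IsOCT (TriRep G) (Sum.inl '' S) ↔ IsVC G S := by
  constructor
  · intro hOCT u v huv
    let e : {e : Sym2 V // e ∈ G.edgeSet} := ⟨s(u, v), huv⟩
    have := hOCT.mem_of_adj_of_adj_of_adj (a := .inl u) (b := .inl v) (c := .inr e) huv
      (by simp [e]) (by simp [e])
    simpa using this
  · intro hS a c _ hodd
    by_contra! hc
    exact Nat.not_even_iff_odd.mpr hodd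
      (c.even_length_of_edges_subset_completeBipartiteGraph
        (hS.edges_subset_completeBipartiteGraph c hc))

theorem stmt14 {V : Type} [Fintype V] [DecidableEq V] (G : SimpleGraph V)
    (S : Set V) :
    IsOCT (TriRep G) (Sum.inl '' S) ↔ IsVC G S :=
  stmt14_general G S
end
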